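/- arXiv:2405.02065 — 5 statements merged into one kernel-verified Lean document; each statement's English description precedes it below -/
import Mathlib

section
/- Let I_≫ denote the category whose objects are surjective order-preserving maps I ↠ P of finite linearly ordered sets, and whose morphisms (I↠P) → (J↠Q) are pairs (θ: I → J, ρ: Q → P) with θ surjective making the square commute, and let J_≫ be the analogous category where the partitioning maps I → P are allowed to be arbitrary order-preserving maps. Then the full inclusion I_≫ ↪ J_≫ admits a left adjoint, sending an object s: I → P to the corestriction s: I ↠ s(I) onto its image. -/
/-!
The unit `(id, s(I) ↪ P) : (I → P) ⟶ (I ↠ s(I))` is universal: if `(θ, ρ) : (s : I → P) ⟶ (t : J ↠ Q)`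
has `θ` surjective, then every `q ∈ Q` is `t (θ i)` for some `i`, so `ρ q = s i` lies in `s(I)`,
and `ρ` corestricts uniquely to `s(I)`.
-/

open CategoryTheory

/-- An object of `𝒥 = Tw(Ord)ᵒᵖ`: a partitioned finite linearly ordered set,
i.e. an order-preserving map `s : I → P` of finite linear orders. -/
structure JObj : Type 1 where
  I : Type
  [linI : LinearOrder I]
  [finI : Fintype I]
  P : Type
  [linP : LinearOrder P]
  [finP : Fintype P]
  s : I →o P

attribute [instance] JObj.linI JObj.finI JObj.linP JObj.finP

/-- A morphism in `𝒥` from `(I → P)` to `(J → Q)`: order-preserving maps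
`θ : I → J` and `ρ : Q → P` making the evident square commute. -/
@[ext]
structure JHom (A B : JObj) where
  θ : A.I →o B.I
  ρ : B.P →o A.P
  comm : ∀ i, ρ (B.s (θ i)) = A.s i

def JHom.comp' {A B C : JObj} (f : JHom A B) (g : JHom B C) : JHom A C :=
  ⟨g.θ.comp f.θ, f.ρ.comp g.ρ, fun i => by
    show f.ρ (g.ρ (C.s (g.θ (f.θ i)))) = A.s i
    rw [g.comm, f.comm]⟩

instance : Category JObj where
  Hom := JHom
  id A := ⟨OrderHom.id, OrderHom.id, fun _ => rfl⟩
  comp := JHom.comp'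

/-- The category `𝒥_≫`: same objects as `𝒥`, but morphisms `(θ, ρ)` with `θ` surjective. -/
def Jgg : Type 1 := JObj

def Jgg.obj (A : Jgg) : JObj := A

instance : Category Jgg where
  Hom A B := {f : JHom A.obj B.obj // Function.Surjective f.θ}
  id A := ⟨⟨OrderHom.id, OrderHom.id, fun _ => rfl⟩, fun i => ⟨i, rfl⟩⟩
  comp f g := ⟨f.1.comp' g.1, g.2.comp f.2⟩

/-- The inclusion `𝒥_≫ ↪ 𝒥`. -/
def inclJgg : Jgg ⥤ JObj where
  obj A := A.obj
  map f := f.1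


/-- The category `ℐ_≫`: the full subcategory of `𝒥_≫` on surjective partitioning maps. -/
def Igg := CategoryTheory.ObjectProperty.FullSubcategory (fun A : Jgg => Function.Surjective A.obj.s)

instance : Category Igg := CategoryTheory.ObjectProperty.FullSubcategory.category _

/-- The object of `𝒥` obtained by corestricting `s : I → P` onto its image. -/
def imgJ (A : JObj) : JObj where
  I := A.I
  P := ↥(Set.range A.s)
  s := ⟨fun i => ⟨A.s i, ⟨i, rfl⟩⟩, fun a b h => Subtype.mk_le_mk.mpr (A.s.monotone h)⟩

theorem imgJ_surj (A : JObj) : Function.Surjective (imgJ A).s :=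
  fun p => ⟨p.2.choose, Subtype.ext p.2.choose_spec⟩

namespace JHom

variable {A B : JObj}

lemma ρ_mem_range_of_surjective (f : JHom A B) (hθ : Function.Surjective f.θ) {q : B.P}
    (hq : q ∈ Set.range B.s) : f.ρ q ∈ Set.range A.s := by
  obtain ⟨j, rfl⟩ := hq
  obtain ⟨i, rfl⟩ := hθ j
  exact ⟨i, (f.comm i).symm⟩

def corestrict (f : JHom A B) (hρ : ∀ q, f.ρ q ∈ Set.range A.s) : JHom (imgJ A) B where
  θ := f.θ
  ρ := ⟨fun q => ⟨f.ρ q, hρ q⟩, fun _ _ h => f.ρ.monotone h⟩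
  comm i := Subtype.ext (f.comm i)

end JHom

def imgJ.unit (A : JObj) : JHom A (imgJ A) where
  θ := OrderHom.id
  ρ := OrderHom.Subtype.val _
  comm _ := rfl

def Igg.image (A : Jgg) : Igg := ⟨(imgJ A.obj : Jgg), imgJ_surj A.obj⟩

def Igg.imageHomEquiv (A : Jgg) (B : Igg) :
    (Igg.image A ⟶ B) ≃ (A ⟶ (ObjectProperty.ι _).obj B) where
  toFun f := ⟨(imgJ.unit A.obj).comp' f.hom.1, f.hom.2⟩
  invFun g := ObjectProperty.homMk
    ⟨g.1.corestrict fun q => g.1.ρ_mem_range_of_surjective g.2 (B.2 q), g.2⟩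
  left_inv _ := rfl
  right_inv _ := rfl

def Igg.imageFunctor : Jgg ⥤ Igg :=
  Adjunction.leftAdjointOfEquiv Igg.imageHomEquiv fun _ _ _ _ _ => rfl

def Igg.imageAdjunction :
    Igg.imageFunctor ⊣ ObjectProperty.ι (fun A : Jgg => Function.Surjective A.obj.s) :=
  Adjunction.adjunctionOfEquivLeft _ _

/-- the full inclusion `ℐ_≫ ↪ 𝒥_≫` admits a left adjoint, sending an
object `s : I → P` to its corestriction `s : I ↠ s(I)` onto its image. -/
theorem stmt_4 :
    ∃ L : Jgg ⥤ Igg,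
      Nonempty (L ⊣ ObjectProperty.ι (fun A : Jgg => Function.Surjective A.obj.s)) ∧
      ∀ A : Jgg, Nonempty (L.obj A ≅ ⟨(imgJ A.obj : Jgg), imgJ_surj A.obj⟩) :=
  ⟨Igg.imageFunctor, ⟨Igg.imageAdjunction⟩, fun _ => ⟨Iso.refl _⟩⟩
end

section
/- Let I_P and J_Q be objects of J = Tw(Ord)^op and θ: I → J an order-preserving map refining the partitions. Set Q_θ = { q ∈ Q : θ^{-1}(J_q) ≠ ∅ }. Then the assignment sending q ∈ Q_θ to the unique p ∈ P with θ^{-1}(J_q) ⊆ I_p is a well-defined order-preserving map ρ_θ: Q_θ → P, and there is a canonical three-step zigzag of morphisms in J: I_P → I_{Q_θ} ← I_Q → J_Q, given respectively by (id_I, ρ_θ), (id_I, ι_θ) where ι_θ: Q_θ ↪ Q is the inclusion, and (θ, id_Q). -/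
open CategoryTheory

/-- `θ : I → J` refines the partitions `I_P`, `J_Q`: for every `q ∈ Q` there is a `p ∈ P`
with `θ⁻¹(J_q) ⊆ I_p`. -/
def Refines (A B : JObj) (f : A.I →o B.I) : Prop :=
  ∀ q : B.P, ∃ p : A.P, ∀ i : A.I, B.s (f i) = q → A.s i = p

/-- `Q_θ = {q ∈ Q ∣ θ⁻¹(J_q) ≠ ∅}`. -/
abbrev Qth (A B : JObj) (f : A.I →o B.I) : Type := {q : B.P // ∃ i, B.s (f i) = q}

/-- The object `I_Q`, given by the composite `r ∘ θ : I → Q`. -/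
abbrev CQ (A B : JObj) (f : A.I →o B.I) : JObj :=
  { I := A.I, P := B.P,
    s := ⟨fun i => B.s (f i), fun _ _ h => B.s.monotone (f.monotone h)⟩ }

/-- The object `I_{Q_θ}`, given by `r ∘ θ` corestricted to `Q_θ`. -/
abbrev Cth (A B : JObj) (f : A.I →o B.I) : JObj :=
  { I := A.I, P := Qth A B f,
    s := ⟨fun i => ⟨B.s (f i), ⟨i, rfl⟩⟩,
      fun _ _ h => Subtype.mk_le_mk.mpr (B.s.monotone (f.monotone h))⟩ }

/-- for `θ` refining the partitions, `q ↦ (the unique p with θ⁻¹(J_q) ⊆ I_p)`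
is a well-defined order-preserving map `ρ_θ : Q_θ → P`, and there is a canonical zigzag
`I_P ⟶ I_{Q_θ} ⟵ I_Q ⟶ J_Q` in `𝒥`, given by `(id_I, ρ_θ)`, `(id_I, ι_θ)` and `(θ, id_Q)`. -/
theorem stmt_6 (A B : JObj) (f : A.I →o B.I) (h : Refines A B f) :
    ∃ ρθ : Qth A B f →o A.P,
      (∀ (q : Qth A B f) (i : A.I), B.s (f i) = q.1 → A.s i = ρθ q) ∧
      (∃ m1 : JHom A (Cth A B f), m1.θ = OrderHom.id ∧ m1.ρ = ρθ) ∧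
      (∃ m2 : JHom (CQ A B f) (Cth A B f), m2.θ = OrderHom.id ∧ ∀ q, m2.ρ q = q.1) ∧
      (∃ m3 : JHom (CQ A B f) B, m3.θ = f ∧ m3.ρ = OrderHom.id) := by
  have spec : ∀ q : Qth A B f, ∀ i : A.I, B.s (f i) = q.1 → A.s i = (h q.1).choose :=
    fun q => (h q.1).choose_spec
  have mono : Monotone (fun q : Qth A B f => (h q.1).choose) := by
    intro q q' hle
    obtain ⟨i, hi⟩ := q.2
    obtain ⟨i', hi'⟩ := q'.2
    show (h q.1).choose ≤ (h q'.1).choose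
    rw [← spec q i hi, ← spec q' i' hi']
    rcases le_total i i' with hii | hii
    · exact A.s.monotone (hii)
    · have : q'.1 ≤ q.1 := by rw [← hi, ← hi']; exact B.s.monotone (f.monotone hii)
      have hqq : q.1 = q'.1 := le_antisymm hle this
      have := spec q i' (by rw [hi', hqq])
      rw [spec q i hi, this]
  refine ⟨⟨fun q => (h q.1).choose, mono⟩, spec, ?_, ?_, ?_⟩
  · exact ⟨⟨OrderHom.id, ⟨fun q => (h q.1).choose, mono⟩,
      fun i => (spec ⟨B.s (f i), ⟨i, rfl⟩⟩ i rfl).symm⟩, rfl, rfl⟩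
  · exact ⟨⟨OrderHom.id, ⟨fun q => q.1, fun _ _ hq => hq⟩, fun _ => rfl⟩, rfl, fun _ => rfl⟩
  · exact ⟨⟨f, OrderHom.id, fun _ => rfl⟩, rfl, rfl⟩
end

section
/- Uniqueness of ρ fails in J but holds in I_≫: if (θ, ρ) and (θ, ρ') are two morphisms (I ↠ P) → (J ↠ Q) in the category I_≫ (where both partitioning maps and θ are surjective), then ρ = ρ'. In contrast, in J there exist two distinct morphisms with the same first component θ; for example, with I = {1<3}, J = {1<2<3}, both partitioned by identity maps, the inclusion θ: I ↪ J underlies two distinct morphisms (θ, ρ) with ρ(2) = 1 or ρ(2) = 3. -/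
open CategoryTheory

/-- The object `{1 < 3}` (two elements) with the identity (complete) partition. -/
def A2 : JObj := { I := Fin 2, P := Fin 2, s := OrderHom.id }

/-- The object `{1 < 2 < 3}` with the identity (complete) partition. -/
def B3 : JObj := { I := Fin 3, P := Fin 3, s := OrderHom.id }

/-- The inclusion `{1 < 3} ↪ {1 < 2 < 3}`, i.e. `0 ↦ 0`, `1 ↦ 2`. -/
def incl23 : Fin 2 →o Fin 3 := ⟨fun i => if i = 0 then 0 else 2, by decide⟩

def rho1 : Fin 3 →o Fin 2 := ⟨fun q => if q ≤ 1 then 0 else 1, by decide⟩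
def rho2 : Fin 3 →o Fin 2 := ⟨fun q => if q = 0 then 0 else 1, by decide⟩

/-- in `ℐ_≫` (both partitioning maps and `θ` surjective) the second component
`ρ` of a morphism is determined by `θ`; in `𝒥` this fails: the inclusion
`{1<3} ↪ {1<2<3}` (with identity partitions) underlies two distinct morphisms. -/
theorem stmt_7 :
    (∀ A B : JObj, Function.Surjective A.s → Function.Surjective B.s →
      ∀ f g : JHom A B, Function.Surjective f.θ → Function.Surjective g.θ →
        f.θ = g.θ → f = g) ∧
    (∃ f g : JHom A2 B3, f.θ = incl23 ∧ g.θ = incl23 ∧ f ≠ g) := by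
  constructor
  · intro A B _hA hB f g hf _hg hθ
    apply JHom.ext hθ
    ext q
    obtain ⟨j, rfl⟩ := hB q
    obtain ⟨i, rfl⟩ := hf j
    rw [f.comm, hθ, g.comm]
  · refine ⟨⟨incl23, rho1, by decide⟩, ⟨incl23, rho2, by decide⟩, rfl, rfl, ?_⟩
    intro h
    have : rho1 = rho2 := congrArg JHom.ρ h
    have := congrFun (congrArg OrderHom.toFun this) 1
    simp [rho1, rho2] at this
end

section
/- For a category D, the projection functor Tw(D)^op → D sending a morphism (x → y) to its source x is colimit-cofinal (a colim-equivalence); in particular, the classifying space of Tw(D) is weakly homotopy equivalent to that of D. -/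
open CategoryTheory Opposite

universe v u

/-- The twisted arrow category of `D`: objects are morphisms of `D`. -/
structure Tw (D : Type u) [Category.{v} D] : Type (max u v) where
  X : D
  Y : D
  f : X ⟶ Y

variable (D : Type u) [Category.{v} D]

/-- A morphism `f ⟶ g` in `Tw D` is a pair `(a, b)` with `g = a ≫ f ≫ b`. -/
instance : Category (Tw D) where
  Hom F G := {p : (G.X ⟶ F.X) × (F.Y ⟶ G.Y) // G.f = p.1 ≫ F.f ≫ p.2}
  id F := ⟨(𝟙 F.X, 𝟙 F.Y), by simp⟩
  comp {F G H} f g := ⟨(g.1.1 ≫ f.1.1, f.1.2 ≫ g.1.2), by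
    obtain ⟨⟨a, b⟩, hf⟩ := f
    obtain ⟨⟨c, d⟩, hg⟩ := g
    dsimp only at *
    rw [hg, hf]
    simp⟩

/-- The projection `Tw(D)ᵒᵖ ⥤ D` sending a morphism `(x ⟶ y)` to its source `x`. -/
def TwProj : (Tw D)ᵒᵖ ⥤ D where
  obj F := F.unop.X
  map h := h.unop.1.1

/- The comma category `d / TwProj` has objects the composable pairs `d ⟶ x ⟶ y`. Any such pair
receives a map from `d ═ d ⟶ y` (the composite `d ⟶ y` read as a twisted arrow), which in turn
maps to the identity `d ═ d ═ d`; so every object is joined to the latter by a zigzag of length two,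
and all the comma categories are connected. -/

variable {D}

namespace Tw

def precompHom {w x y : D} (u : w ⟶ x) (f : x ⟶ y) : (⟨x, y, f⟩ : Tw D) ⟶ ⟨w, y, u ≫ f⟩ :=
  ⟨(u, 𝟙 y), by simp⟩

def idHom {x y : D} (f : x ⟶ y) : (⟨x, x, 𝟙 x⟩ : Tw D) ⟶ ⟨x, y, f⟩ :=
  ⟨(𝟙 x, f), by simp⟩

end Tw

namespace TwProj

variable (d : D)

def idUnder : StructuredArrow d (TwProj D) :=
  StructuredArrow.mk (Y := op (⟨d, d, 𝟙 d⟩ : Tw D)) (𝟙 d)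

variable {d}

def compUnder (g : StructuredArrow d (TwProj D)) : StructuredArrow d (TwProj D) :=
  StructuredArrow.mk (Y := op (⟨d, g.right.unop.Y, g.hom ≫ g.right.unop.f⟩ : Tw D)) (𝟙 d)

def compUnderHom (g : StructuredArrow d (TwProj D)) : compUnder g ⟶ g :=
  StructuredArrow.homMk (Tw.precompHom g.hom g.right.unop.f).op (Category.id_comp g.hom)

def compUnderHomIdUnder (g : StructuredArrow d (TwProj D)) : compUnder g ⟶ idUnder d :=
  StructuredArrow.homMk (Tw.idHom (g.hom ≫ g.right.unop.f)).op (Category.id_comp (𝟙 d))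

theorem zigzag_idUnder (g : StructuredArrow d (TwProj D)) : Zigzag g (idUnder d) :=
  (Zigzag.of_inv (compUnderHom g)).trans (Zigzag.of_hom (compUnderHomIdUnder g))

end TwProj

variable (D)

/-- the projection `Tw(D)ᵒᵖ ⥤ D`, `(x → y) ↦ x`, is colimit-cofinal
(a colim-equivalence); in particular `|Tw(D)| ≃ |D|`. -/
theorem stmt_10 : (TwProj D).Final := by
  refine ⟨fun d => ?_⟩
  have : Nonempty (StructuredArrow d (TwProj D)) := ⟨TwProj.idUnder d⟩
  exact zigzag_isConnected fun g₁ g₂ =>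
    (TwProj.zigzag_idUnder g₁).trans (TwProj.zigzag_idUnder g₂).symm
end

section
/- Let R be a PID (or more generally a Dedekind domain) with field of fractions K and M a finitely generated projective R-module. Extension of scalars V ↦ V ⊗_R K defines an isomorphism from the poset of splittable (direct-summand) submodules of M to the poset of K-subspaces of M ⊗_R K, with inverse W ↦ W ∩ M. In particular the Tits complex T_R(M) (the order complex of proper nonzero direct summands of M) is GL(M)-equivariantly isomorphic to the Tits building T_K(M ⊗_R K). -/
/-!
Localization at `R⁰` gives a Galois insertion `N ↦ K ∙ N`, `W ↦ W ∩ M` between `R`-submodules of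
`M` and `K`-subspaces of `K ⊗[R] M`, whose closed elements are the saturated submodules, i.e. those
`N` with `M ⧸ N` torsion-free. Over a Dedekind domain a finitely generated torsion-free module is
flat and finitely presented, hence projective, so for `M` projective `M ⧸ N` is torsion-free exactly
when `N` is a direct summand. Equivariance holds because both sides are spans of the same image.
-/

open TensorProduct Module Submodule nonZeroDivisors

section Saturation

variable {R M N : Type*} [CommRing R] [AddCommGroup M] [Module R M] [AddCommGroup N] [Module R N]

theorem Submodule.isTorsionFree_quotient_comap (f : M →ₗ[R] N) (W : Submodule R N)
    [IsTorsionFree R (N ⧸ W)] : IsTorsionFree R (M ⧸ W.comap f) := by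
  have hker : LinearMap.ker ((W.comap f).mapQ W f le_rfl) = ⊥ := by
    rw [ker_mapQ, mkQ_map_self]
  exact (LinearMap.ker_eq_bot.mp hker).moduleIsTorsionFree _ (map_smul _)

theorem Submodule.isTorsionFree_quotient_restrictScalars {K V : Type*} [Field K] [Algebra R K]
    [IsTorsionFree R K] [AddCommGroup V] [Module K V] [Module R V] [IsScalarTower R K V]
    (W : Submodule K V) : IsTorsionFree R (V ⧸ W.restrictScalars R) :=
  have : IsTorsionFree R (V ⧸ W) := .trans (R := K)
  (Quotient.restrictScalarsEquiv R W).injective.moduleIsTorsionFree _ (map_smul _)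

theorem Submodule.comap_localized'_of_isTorsionFree_quotient (S : Type*) [CommRing S]
    [Algebra R S] [Module S N] [IsScalarTower R S N] {p : Submonoid R} (hp : p ≤ R⁰)
    [IsLocalization p S] (f : M →ₗ[R] N) [IsLocalizedModule p f] (L : Submodule R M)
    [IsTorsionFree R (M ⧸ L)] :
    comap f ((L.localized' S p f).restrictScalars R) = L := by
  refine le_antisymm (fun m hm => ?_) ((localized'gi S p f).gc.le_u_l L)
  obtain ⟨l, hl, s, hs⟩ := (mem_localized' S p f L (f m)).mp hm
  rw [IsLocalizedModule.mk'_eq_iff, Submonoid.smul_def, ← map_smul] at hs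
  obtain ⟨c, hc⟩ := IsLocalizedModule.exists_of_eq (S := p) hs
  have hcs : ((c * s : p) : R) • m ∈ L := by
    rw [Submonoid.coe_mul, mul_smul, ← Submonoid.smul_def c, ← hc]
    exact L.smul_of_tower_mem c hl
  have hreg : IsRegular ((c * s : p) : R) := isRegular_iff_mem_nonZeroDivisors.mpr (hp (c * s).2)
  rwa [← Quotient.mk_eq_zero, Quotient.mk_smul, hreg.smul_eq_zero_iff_right,
    Quotient.mk_eq_zero] at hcs

theorem Submodule.isTorsionFree_quotient_of_isCompl [IsTorsionFree R M] {L L' : Submodule R M}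
    (h : IsCompl L L') : IsTorsionFree R (M ⧸ L) :=
  (quotientEquivOfIsCompl L L' h).injective.moduleIsTorsionFree _ (map_smul _)

theorem Submodule.comap_localized'_of_isCompl [IsTorsionFree R M] (S : Type*) [CommRing S]
    [Algebra R S] [Module S N] [IsScalarTower R S N] {p : Submonoid R} (hp : p ≤ R⁰)
    [IsLocalization p S] (f : M →ₗ[R] N) [IsLocalizedModule p f] {L L' : Submodule R M}
    (h : IsCompl L L') : comap f ((L.localized' S p f).restrictScalars R) = L :=
  have := isTorsionFree_quotient_of_isCompl h
  comap_localized'_of_isTorsionFree_quotient S hp f L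

end Saturation

section Splitting

variable {R M : Type*} [CommRing R] [AddCommGroup M] [Module R M]

theorem LinearMap.exists_isCompl_ker_of_surjective {P : Type*} [AddCommGroup P] [Module R P]
    [Projective R P] (f : M →ₗ[R] P) (hf : Function.Surjective f) :
    ∃ q, IsCompl (LinearMap.ker f) q := by
  obtain ⟨s, hs⟩ := projective_lifting_property f LinearMap.id hf
  have hidem : IsIdempotentElem (s ∘ₗ f) :=
    LinearMap.ext fun x => congrArg s (LinearMap.congr_fun hs (f x))
  have hker : LinearMap.ker (s ∘ₗ f) = LinearMap.ker f :=
    LinearMap.ker_comp_of_ker_eq_bot f (LinearMap.ker_eq_bot_of_inverse hs)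
  rw [← hker]
  exact ⟨_, (IsIdempotentElem.isCompl hidem).symm⟩

theorem Submodule.exists_isCompl_of_isTorsionFree_quotient [IsDedekindDomain R]
    [Module.Finite R M] (N : Submodule R M) [IsTorsionFree R (M ⧸ N)] : ∃ N', IsCompl N N' := by
  have := Module.finitePresentation_of_finite R (M ⧸ N)
  have : Projective R (M ⧸ N) := Flat.projective_of_finitePresentation
  simpa using N.mkQ.exists_isCompl_ker_of_surjective N.mkQ_surjective

end Splitting

section BaseChange

variable (R K M : Type*) [CommRing R] [IsDedekindDomain R] [Field K] [Algebra R K]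
  [IsFractionRing R K] [AddCommGroup M] [Module R M]

local notation "ι" => TensorProduct.mk R K M 1

noncomputable def splittableSubmoduleOrderIso [Module.Finite R M] [IsTorsionFree R M] :
    {N : Submodule R M // ∃ N', IsCompl N N'} ≃o Submodule K (K ⊗[R] M) where
  toFun N := N.1.localized' K R⁰ ι
  invFun W := ⟨(W.restrictScalars R).comap ι,
    have := W.isTorsionFree_quotient_restrictScalars (R := R)
    have := isTorsionFree_quotient_comap ι (W.restrictScalars R)
    exists_isCompl_of_isTorsionFree_quotient _⟩
  left_inv N := Subtype.ext (comap_localized'_of_isCompl K le_rfl ι N.2.choose_spec)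
  right_inv W := (localized'gi K R⁰ _).l_u_eq W
  map_rel_iff' {N₁ N₂} := by
    refine ⟨fun h => ?_, fun h => (localized'gi K R⁰ _).gc.monotone_l h⟩
    change N₁.1 ≤ N₂.1
    rw [← comap_localized'_of_isCompl K le_rfl ι N₁.2.choose_spec,
      ← comap_localized'_of_isCompl K le_rfl ι N₂.2.choose_spec]
    exact fun _ hm => h hm

end BaseChange

section Equivariance

variable {R M M' : Type*} [CommRing R] [AddCommGroup M] [Module R M] [AddCommGroup M']
  [Module R M'] (S : Type*) [CommRing S] [Algebra R S] (p : Submonoid R) [IsLocalization p S]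

theorem Submodule.localized'_map_baseChange (g : M →ₗ[R] M') (N : Submodule R M) :
    (N.map g).localized' S p (TensorProduct.mk R S M' 1) =
      (N.localized' S p (TensorProduct.mk R S M 1)).map (g.baseChange S) := by
  rw [localized'_eq_span, localized'_eq_span, map_span, map_coe, Set.image_image, Set.image_image]
  rfl

end Equivariance

theorem stmt_18_general (R : Type) [CommRing R] [IsDedekindDomain R]
    (K : Type) [Field K] [Algebra R K] [IsFractionRing R K]
    (M : Type) [AddCommGroup M] [Module R M] [Module.Finite R M] [Module.Projective R M] :
    ∃ e : {N : Submodule R M // ∃ N', IsCompl N N'} ≃o Submodule K (K ⊗[R] M),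
      (∀ N : {N : Submodule R M // ∃ N', IsCompl N N'},
        e N = Submodule.span K (⇑(TensorProduct.mk R K M 1) '' (N.1 : Set M))) ∧
      (∀ W : Submodule K (K ⊗[R] M),
        ((e.symm W).1 : Set M) = ⇑(TensorProduct.mk R K M 1) ⁻¹' (W : Set (K ⊗[R] M))) ∧
      (∀ (g : M ≃ₗ[R] M) (N : Submodule R M)
        (h1 : ∃ N', IsCompl N N')
        (h2 : ∃ N', IsCompl (N.map (g : M →ₗ[R] M)) N'),
        e ⟨N.map (g : M →ₗ[R] M), h2⟩ =
          Submodule.map (LinearMap.baseChange K (g : M →ₗ[R] M)) (e ⟨N, h1⟩)) :=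
  ⟨splittableSubmoduleOrderIso R K M, fun N => localized'_eq_span K R⁰ _ N.1, fun _ => rfl,
    fun g N _ _ => localized'_map_baseChange K R⁰ (g : M →ₗ[R] M) N⟩

/-- for a Dedekind domain `R` with fraction field `K` and a finitely
generated projective `R`-module `M`, extension of scalars `N ↦ N ⊗_R K` is an
isomorphism from the poset of splittable (direct-summand) submodules of `M` onto the
poset of `K`-subspaces of `M ⊗_R K`, with inverse `W ↦ W ∩ M`; it is moreover
`GL(M)`-equivariant (hence induces an isomorphism of Tits complexes
`𝒯_R(M) ≅ 𝒯_K(M ⊗_R K)`). -/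
theorem stmt_18 (R : Type) [CommRing R] [IsDomain R] [IsDedekindDomain R]
    (K : Type) [Field K] [Algebra R K] [IsFractionRing R K]
    (M : Type) [AddCommGroup M] [Module R M] [Module.Finite R M] [Module.Projective R M] :
    ∃ e : {N : Submodule R M // ∃ N', IsCompl N N'} ≃o Submodule K (K ⊗[R] M),
      (∀ N : {N : Submodule R M // ∃ N', IsCompl N N'},
        e N = Submodule.span K (⇑(TensorProduct.mk R K M 1) '' (N.1 : Set M))) ∧
      (∀ W : Submodule K (K ⊗[R] M),
        ((e.symm W).1 : Set M) = ⇑(TensorProduct.mk R K M 1) ⁻¹' (W : Set (K ⊗[R] M))) ∧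
      (∀ (g : M ≃ₗ[R] M) (N : Submodule R M)
        (h1 : ∃ N', IsCompl N N')
        (h2 : ∃ N', IsCompl (N.map (g : M →ₗ[R] M)) N'),
        e ⟨N.map (g : M →ₗ[R] M), h2⟩ =
          Submodule.map (LinearMap.baseChange K (g : M →ₗ[R] M)) (e ⟨N, h1⟩)) :=
  stmt_18_general R K M
end
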